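/- Let I ⊆ ℝ be an interval, C > 0, and let ρ : I → (0,∞) be differentiable with |ρ'(x)| ≤ C/ρ(x)² for all x ∈ I. Then for all x, y ∈ I, |ρ(x) − ρ(y)| ≤ (3C)^{1/3} |x − y|^{1/3}. -/

import Mathlib

/-!
If `|ρ'| ≤ C / ρ ^ (n - 1)`, the derivative of `ρ ^ n` is bounded by `n C`, so `ρ ^ n` is
`n C`-Lipschitz on the convex set. For nonnegative `a, b` one has `|a - b| ^ n ≤ |a ^ n - b ^ n|`
(superadditivity of `t ↦ t ^ n`), hence `|ρ x - ρ y| ^ n ≤ n C |x - y|`; take `n`-th roots.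
-/

theorem pow_abs_sub_le_abs_pow_sub_pow {R : Type*} [CommRing R] [LinearOrder R]
    [IsStrictOrderedRing R] {a b : R} (ha : 0 ≤ a) (hb : 0 ≤ b) {n : ℕ} (hn : n ≠ 0) :
    |a - b| ^ n ≤ |a ^ n - b ^ n| := by
  wlog hba : b ≤ a generalizing a b
  · rw [abs_sub_comm, abs_sub_comm (a ^ n)]
    exact this hb ha (le_of_not_ge hba)
  have hsuper : (a - b) ^ n + b ^ n ≤ a ^ n := by
    simpa using pow_add_pow_le (sub_nonneg.2 hba) hb hn
  rw [abs_of_nonneg (sub_nonneg.2 hba)]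
  exact (le_sub_iff_add_le.2 hsuper).trans (le_abs_self _)

theorem Real.le_rpow_inv_natCast_of_pow_le {t s : ℝ} (ht : 0 ≤ t) (hs : 0 ≤ s) {n : ℕ}
    (hn : n ≠ 0) (h : t ^ n ≤ s) : t ≤ s ^ ((1 : ℝ) / n) := by
  rw [one_div, Real.le_rpow_inv_iff_of_pos ht hs (by positivity), Real.rpow_natCast]
  exact h

theorem Convex.abs_pow_image_sub_le {I : Set ℝ} (hI : Convex ℝ I) {ρ ρ' : ℝ → ℝ} {n : ℕ}
    {C : ℝ} (hderiv : ∀ x ∈ I, HasDerivWithinAt ρ (ρ' x) I x)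
    (hbound : ∀ x ∈ I, |ρ' x| * |ρ x| ^ (n - 1) ≤ C) {x y : ℝ} (hx : x ∈ I) (hy : y ∈ I) :
    |ρ x ^ n - ρ y ^ n| ≤ n * C * |x - y| := by
  have hpow : ∀ z ∈ I, HasDerivWithinAt (fun t ↦ ρ t ^ n) (n * ρ z ^ (n - 1) * ρ' z) I z :=
    fun z hz ↦ (hderiv z hz).fun_pow n
  have hpow_bound : ∀ z ∈ I, ‖n * ρ z ^ (n - 1) * ρ' z‖ ≤ n * C := fun z hz ↦ by
    rw [Real.norm_eq_abs, abs_mul, abs_mul, abs_pow, Nat.abs_cast, mul_assoc, mul_comm (|ρ z| ^ _)]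
    exact mul_le_mul_of_nonneg_left (hbound z hz) n.cast_nonneg
  simpa only [Real.norm_eq_abs] using
    hI.norm_image_sub_le_of_norm_hasDerivWithin_le hpow hpow_bound hy hx

theorem Convex.abs_image_sub_le_rpow_of_abs_deriv_mul_pow_le {I : Set ℝ} (hI : Convex ℝ I)
    {ρ ρ' : ℝ → ℝ} {n : ℕ} (hn : n ≠ 0) {C : ℝ} (hC : 0 ≤ C) (hnonneg : ∀ x ∈ I, 0 ≤ ρ x)
    (hderiv : ∀ x ∈ I, HasDerivWithinAt ρ (ρ' x) I x)
    (hbound : ∀ x ∈ I, |ρ' x| * |ρ x| ^ (n - 1) ≤ C) {x y : ℝ} (hx : x ∈ I) (hy : y ∈ I) :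
    |ρ x - ρ y| ≤ (n * C) ^ ((1 : ℝ) / n) * |x - y| ^ ((1 : ℝ) / n) := by
  have hcube : |ρ x - ρ y| ^ n ≤ n * C * |x - y| :=
    (pow_abs_sub_le_abs_pow_sub_pow (hnonneg x hx) (hnonneg y hy) hn).trans
      (hI.abs_pow_image_sub_le hderiv hbound hx hy)
  rw [← Real.mul_rpow (by positivity) (abs_nonneg _)]
  exact Real.le_rpow_inv_natCast_of_pow_le (abs_nonneg _) (by positivity) hn hcube

theorem stmt_6 (I : Set ℝ) (hI : Convex ℝ I) (C : ℝ) (hC : 0 < C)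
    (ρ ρ' : ℝ → ℝ) (hpos : ∀ x ∈ I, 0 < ρ x)
    (hderiv : ∀ x ∈ I, HasDerivWithinAt ρ (ρ' x) I x)
    (hbound : ∀ x ∈ I, |ρ' x| ≤ C / (ρ x) ^ 2) :
    ∀ x ∈ I, ∀ y ∈ I, |ρ x - ρ y| ≤ (3 * C) ^ ((1:ℝ)/3) * |x - y| ^ ((1:ℝ)/3) := by
  have hbound' : ∀ x ∈ I, |ρ' x| * |ρ x| ^ (3 - 1) ≤ C := fun x hx ↦ by
    rw [abs_of_pos (hpos x hx), ← le_div_iff₀ (pow_pos (hpos x hx) _)]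
    exact hbound x hx
  intro x hx y hy
  exact_mod_cast hI.abs_image_sub_le_rpow_of_abs_deriv_mul_pow_le three_ne_zero hC.le
    (fun z hz ↦ (hpos z hz).le) hderiv hbound' hx hy
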